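/- arXiv:1502.05477 — 4 statements merged into one kernel-verified Lean document; each statement's English description precedes it below -/
import Mathlib

section
/- For any two stochastic policies π and π̃ on a discounted MDP, the expected discounted return of π̃ equals the return of π plus the expected discounted sum of advantages of π along trajectories generated by π̃: η(π̃) = η(π) + E_{τ∼π̃}[Σ_{t=0}^∞ γ^t A_π(s_t, a_t)]. -/
open Finset

/-
Write `d t` for the state distribution of `π̃` at time `t` and `P^π̃ h` for the expected value of
`h` one step ahead under `π̃`. Averaged over `π̃`, the advantage of `π` at `s` is
`r s + γ (P^π̃ V) s - V s`, and the Bellman equation gives `r s = Ṽ s - γ (P^π̃ Ṽ) s`, so it equals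
`W s - γ (P^π̃ W) s` with `W = Ṽ - V`. Since `d (t+1)` is `d t` pushed forward by `P^π̃`, the
`t`-th discounted term is `γ^t ⟨d t, W⟩ - γ^(t+1) ⟨d (t+1), W⟩`, and the series telescopes to
`⟨ρ₀, W⟩`. The stochastic kernel `P^π̃` does not increase the `ℓ¹` norm, so `⟨d t, W⟩` stays
bounded and the telescoping series converges.
-/

/-- State distribution at time `t` when executing policy `π` in the MDP with
transition kernel `P`, starting from initial state distribution `ρ₀`. -/
noncomputable def stateDist {S A : Type} [Fintype S] [Fintype A]
    (P : S → A → S → ℝ) (π : S → A → ℝ) (ρ₀ : S → ℝ) : ℕ → S → ℝ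
  | 0 => ρ₀
  | (t+1) => fun s' => ∑ s, ∑ a, stateDist P π ρ₀ t s * π s a * P s a s'

section MarkovChain

variable {S A : Type} [Fintype S] [Fintype A] (P : S → A → S → ℝ) (π : S → A → ℝ)

noncomputable def nextExpectation (h : S → ℝ) (s : S) : ℝ :=
  ∑ a, π s a * ∑ s', P s a s' * h s'

lemma nextExpectation_sub (h k : S → ℝ) (s : S) :
    nextExpectation P π (h - k) s = nextExpectation P π h s - nextExpectation P π k s := by
  simp only [nextExpectation, Pi.sub_apply, mul_sub, sum_sub_distrib]

lemma sum_policy_mul_eq_add_nextExpectation (hπsum : ∀ s, ∑ a, π s a = 1) (γ c : ℝ) (h : S → ℝ) (s : S) :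
    ∑ a, π s a * (c + γ * ∑ s', P s a s' * h s') = c + γ * nextExpectation P π h s := by
  simp only [nextExpectation, mul_add, sum_add_distrib, ← sum_mul, hπsum, one_mul, mul_sum]
  congr 1
  refine sum_congr rfl fun a _ => sum_congr rfl fun s' _ => ?_
  ring

variable (ρ₀ : S → ℝ)

lemma sum_stateDist_succ_mul (h : S → ℝ) (t : ℕ) :
    ∑ s', stateDist P π ρ₀ (t + 1) s' * h s' =
      ∑ s, stateDist P π ρ₀ t s * nextExpectation P π h s := by
  simp only [stateDist, nextExpectation, sum_mul, mul_sum]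
  rw [sum_comm]
  refine sum_congr rfl fun s _ => ?_
  rw [sum_comm]
  refine sum_congr rfl fun a _ => sum_congr rfl fun s' _ => ?_
  ring

variable {P π}

lemma sum_abs_stateDist_le (hP : ∀ s a s', 0 ≤ P s a s') (hPsum : ∀ s a, ∑ s', P s a s' = 1)
    (hπ : ∀ s a, 0 ≤ π s a) (hπsum : ∀ s, ∑ a, π s a = 1) (t : ℕ) :
    ∑ s, |stateDist P π ρ₀ t s| ≤ ∑ s, |ρ₀ s| := by
  induction t with
  | zero => rfl
  | succ t ih =>
    calc ∑ s', |stateDist P π ρ₀ (t + 1) s'|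
        ≤ ∑ s', ∑ s, ∑ a, |stateDist P π ρ₀ t s| * π s a * P s a s' := by
          refine sum_le_sum fun s' _ => (abs_sum_le_sum_abs _ _).trans ?_
          refine sum_le_sum fun s _ => (abs_sum_le_sum_abs _ _).trans_eq ?_
          refine sum_congr rfl fun a _ => ?_
          rw [abs_mul, abs_mul, abs_of_nonneg (hπ s a), abs_of_nonneg (hP s a s')]
      _ = ∑ s, |stateDist P π ρ₀ t s| := by
          rw [sum_comm]
          refine sum_congr rfl fun s _ => ?_
          rw [sum_comm]
          simp only [← mul_sum, hPsum, mul_one, hπsum]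
      _ ≤ ∑ s, |ρ₀ s| := ih

lemma abs_sum_stateDist_mul_le (hP : ∀ s a s', 0 ≤ P s a s')
    (hPsum : ∀ s a, ∑ s', P s a s' = 1) (hπ : ∀ s a, 0 ≤ π s a) (hπsum : ∀ s, ∑ a, π s a = 1)
    (h : S → ℝ) (t : ℕ) :
    |∑ s, stateDist P π ρ₀ t s * h s| ≤ (∑ s, |ρ₀ s|) * ∑ s, |h s| :=
  calc |∑ s, stateDist P π ρ₀ t s * h s|
      ≤ ∑ s, |stateDist P π ρ₀ t s| * ∑ s, |h s| := by
        refine (abs_sum_le_sum_abs _ _).trans (sum_le_sum fun s _ => ?_)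
        rw [abs_mul]
        gcongr
        exact single_le_sum (fun s _ => abs_nonneg (h s)) (mem_univ s)
    _ ≤ (∑ s, |ρ₀ s|) * ∑ s, |h s| := by
        rw [← sum_mul]
        exact mul_le_mul_of_nonneg_right (sum_abs_stateDist_le ρ₀ hP hPsum hπ hπsum t)
          (sum_nonneg fun s _ => abs_nonneg (h s))

end MarkovChain

lemma hasSum_geometric_mul_sub_succ {γ M : ℝ} (hγ0 : 0 ≤ γ) (hγ1 : γ < 1) {e : ℕ → ℝ}
    (he : ∀ t, |e t| ≤ M) :
    HasSum (fun t => γ ^ t * e t - γ ^ (t + 1) * e (t + 1)) (e 0) := by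
  have hsumm : Summable fun t => γ ^ t * e t := by
    refine .of_norm_bounded ((summable_geometric_of_lt_one hγ0 hγ1).mul_right M) fun t => ?_
    rw [norm_mul, norm_pow, Real.norm_of_nonneg hγ0]
    exact mul_le_mul_of_nonneg_left (he t) (pow_nonneg hγ0 t)
  have hshift := (hasSum_nat_add_iff' 1).mpr hsumm.hasSum
  simpa using hsumm.hasSum.sub hshift

theorem stmt_0_general {S A : Type} [Fintype S] [Fintype A]
    (P : S → A → S → ℝ) (r : S → ℝ) (ρ₀ : S → ℝ) (γ : ℝ)
    (πt : S → A → ℝ) (V Vt : S → ℝ) (Q Aπ : S → A → ℝ)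
    (hγ0 : 0 ≤ γ) (hγ1 : γ < 1)
    (hPpos : ∀ s a s', 0 ≤ P s a s') (hPsum : ∀ s a, ∑ s', P s a s' = 1)
    (hπtpos : ∀ s a, 0 ≤ πt s a) (hπtsum : ∀ s, ∑ a, πt s a = 1)
    (hVt : ∀ s, Vt s = ∑ a, πt s a * (r s + γ * ∑ s', P s a s' * Vt s'))
    (hQ : ∀ s a, Q s a = r s + γ * ∑ s', P s a s' * V s')
    (hA : ∀ s a, Aπ s a = Q s a - V s) :
    ∑ s, ρ₀ s * Vt s =
      (∑ s, ρ₀ s * V s) +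
        ∑' t : ℕ, γ ^ t * ∑ s, stateDist P πt ρ₀ t s * ∑ a, πt s a * Aπ s a := by
  set W := Vt - V
  have hAdv s : ∑ a, πt s a * Aπ s a = W s - γ * nextExpectation P πt W s := by
    have hBellman := (hVt s).trans (sum_policy_mul_eq_add_nextExpectation P πt hπtsum γ (r s) Vt s)
    have hAvg := sum_policy_mul_eq_add_nextExpectation P πt hπtsum γ (r s - V s) V s
    simp only [hA, hQ, sub_add_eq_add_sub] at hAvg ⊢
    rw [hAvg, nextExpectation_sub]
    simp only [W, Pi.sub_apply]
    linarith
  set e : ℕ → ℝ := fun t => ∑ s, stateDist P πt ρ₀ t s * W s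
  have hterm t : γ ^ t * ∑ s, stateDist P πt ρ₀ t s * ∑ a, πt s a * Aπ s a =
      γ ^ t * e t - γ ^ (t + 1) * e (t + 1) := by
    have hpush : e (t + 1) = ∑ s, stateDist P πt ρ₀ t s * nextExpectation P πt W s :=
      sum_stateDist_succ_mul P πt ρ₀ W t
    simp only [hpush, e, hAdv, mul_sub, sum_sub_distrib, mul_left_comm _ γ, ← mul_sum]
    ring
  have hsum := hasSum_geometric_mul_sub_succ hγ0 hγ1
    (abs_sum_stateDist_mul_le ρ₀ hPpos hPsum hπtpos hπtsum W)
  rw [funext hterm, hsum.tsum_eq]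
  simp [W, stateDist, mul_sub]

/-- η(π̃) = η(π) + E_{τ∼π̃}[ Σ_t γ^t A_π(s_t,a_t) ]. -/
theorem stmt_0 {S A : Type} [Fintype S] [Fintype A]
    (P : S → A → S → ℝ) (r : S → ℝ) (ρ₀ : S → ℝ) (γ : ℝ)
    (π πt : S → A → ℝ) (V Vt : S → ℝ) (Q Aπ : S → A → ℝ)
    (hγ0 : 0 ≤ γ) (hγ1 : γ < 1)
    (hPpos : ∀ s a s', 0 ≤ P s a s') (hPsum : ∀ s a, ∑ s', P s a s' = 1)
    (hρpos : ∀ s, 0 ≤ ρ₀ s) (hρsum : ∑ s, ρ₀ s = 1)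
    (hπpos : ∀ s a, 0 ≤ π s a) (hπsum : ∀ s, ∑ a, π s a = 1)
    (hπtpos : ∀ s a, 0 ≤ πt s a) (hπtsum : ∀ s, ∑ a, πt s a = 1)
    (hV : ∀ s, V s = ∑ a, π s a * (r s + γ * ∑ s', P s a s' * V s'))
    (hVt : ∀ s, Vt s = ∑ a, πt s a * (r s + γ * ∑ s', P s a s' * Vt s'))
    (hQ : ∀ s a, Q s a = r s + γ * ∑ s', P s a s' * V s')
    (hA : ∀ s a, Aπ s a = Q s a - V s) :
    ∑ s, ρ₀ s * Vt s =
      (∑ s, ρ₀ s * V s) +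
        ∑' t : ℕ, γ ^ t * ∑ s, stateDist P πt ρ₀ t s * ∑ a, πt s a * Aπ s a :=
  stmt_0_general P r ρ₀ γ πt V Vt Q Aπ hγ0 hγ1 hPpos hPsum hπtpos hπtsum hVt hQ hA
end

section
/- For any two stochastic policies π and π̃, η(π̃) = η(π) + Σ_s ρ_π̃(s) Σ_a π̃(a|s) A_π(s,a), where ρ_π̃(s) = Σ_{t=0}^∞ γ^t P(s_t = s | π̃, ρ₀) is the unnormalized discounted state visitation frequency under π̃. -/
open Finset

/-- Unnormalized discounted state visitation frequency. -/
noncomputable def visit {S A : Type} [Fintype S] [Fintype A]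
    (P : S → A → S → ℝ) (π : S → A → ℝ) (ρ₀ : S → ℝ) (γ : ℝ) (s : S) : ℝ :=
  ∑' t : ℕ, γ ^ t * stateDist P π ρ₀ t s

/-!
With `W = Ṽ - V`, the Bellman equation for `Ṽ` turns the `π̃`-average of `A_π` at `s` into
`W s - γ (P_π̃ W) s`. Pairing with the state distribution `d_t` and using `d_{t+1} = d_t P_π̃`,
the `t`-th term of the visitation series becomes `γ^t ⟨d_t, W⟩ - γ^(t+1) ⟨d_{t+1}, W⟩`, so the
series telescopes to `⟨ρ₀, W⟩ = η(π̃) - η(π)`. Everything converges because a stochastic kernel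
does not increase the `ℓ¹` norm, so `d_t` stays bounded.
-/

theorem Summable.tsum_sub_succ {G : Type*} [AddCommGroup G] [TopologicalSpace G]
    [IsTopologicalAddGroup G] [T2Space G] {u : ℕ → G} (hu : Summable u) :
    ∑' n, (u n - u (n + 1)) = u 0 := by
  rw [hu.tsum_sub ((summable_nat_add_iff 1).mpr hu), hu.tsum_eq_zero_add, add_sub_cancel_right]

noncomputable def expectNext {S A : Type} [Fintype S] [Fintype A] (P : S → A → S → ℝ)
    (π : S → A → ℝ) (W : S → ℝ) (s : S) : ℝ :=
  ∑ a, π s a * ∑ s', P s a s' * W s'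

namespace stateDist

variable {S A : Type} [Fintype S] [Fintype A] (P : S → A → S → ℝ) (π : S → A → ℝ) (ρ₀ : S → ℝ)

theorem sum_succ_mul (t : ℕ) (W : S → ℝ) :
    ∑ s, stateDist P π ρ₀ (t + 1) s * W s = ∑ s, stateDist P π ρ₀ t s * expectNext P π W s := by
  simp only [stateDist, expectNext, Finset.sum_mul, Finset.mul_sum]
  rw [Finset.sum_comm]
  refine Finset.sum_congr rfl fun s _ => ?_
  rw [Finset.sum_comm]
  refine Finset.sum_congr rfl fun a _ => Finset.sum_congr rfl fun s' _ => ?_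
  ring

variable {P π}

theorem expectNext_const (hPsum : ∀ s a, ∑ s', P s a s' = 1) (hπsum : ∀ s, ∑ a, π s a = 1)
    (c : ℝ) (s : S) : expectNext P π (fun _ => c) s = c := by
  simp only [expectNext, ← Finset.sum_mul, hPsum, one_mul, hπsum]

theorem abs_succ_le (hP : ∀ s a s', 0 ≤ P s a s') (hπ : ∀ s a, 0 ≤ π s a) (t : ℕ) (s' : S) :
    |stateDist P π ρ₀ (t + 1) s'| ≤ stateDist P π (fun s => |stateDist P π ρ₀ t s|) 1 s' := by
  simp only [stateDist]
  refine (Finset.abs_sum_le_sum_abs _ _).trans (Finset.sum_le_sum fun s _ => ?_)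
  refine (Finset.abs_sum_le_sum_abs _ _).trans (le_of_eq (Finset.sum_congr rfl fun a _ => ?_))
  rw [abs_mul, abs_mul, abs_of_nonneg (hπ s a), abs_of_nonneg (hP s a s')]

theorem sum_abs_succ_le (hP : ∀ s a s', 0 ≤ P s a s') (hPsum : ∀ s a, ∑ s', P s a s' = 1)
    (hπ : ∀ s a, 0 ≤ π s a) (hπsum : ∀ s, ∑ a, π s a = 1) (t : ℕ) :
    ∑ s, |stateDist P π ρ₀ (t + 1) s| ≤ ∑ s, |stateDist P π ρ₀ t s| := by
  have h := sum_succ_mul P π (fun s => |stateDist P π ρ₀ t s|) 0 (fun _ => 1)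
  simp only [mul_one, expectNext_const hPsum hπsum] at h
  exact (Finset.sum_le_sum fun s' _ => abs_succ_le ρ₀ hP hπ t s').trans h.le

theorem sum_abs_le (hP : ∀ s a s', 0 ≤ P s a s') (hPsum : ∀ s a, ∑ s', P s a s' = 1)
    (hπ : ∀ s a, 0 ≤ π s a) (hπsum : ∀ s, ∑ a, π s a = 1) (t : ℕ) :
    ∑ s, |stateDist P π ρ₀ t s| ≤ ∑ s, |ρ₀ s| := by
  induction t with
  | zero => rfl
  | succ t ih => exact (sum_abs_succ_le ρ₀ hP hPsum hπ hπsum t).trans ih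

theorem summable_pow_mul (hP : ∀ s a s', 0 ≤ P s a s') (hPsum : ∀ s a, ∑ s', P s a s' = 1)
    (hπ : ∀ s a, 0 ≤ π s a) (hπsum : ∀ s, ∑ a, π s a = 1) {γ : ℝ} (hγ : |γ| < 1) (s : S) :
    Summable fun t => γ ^ t * stateDist P π ρ₀ t s := by
  refine Summable.of_norm_bounded ((summable_geometric_of_abs_lt_one hγ).abs.mul_right
    (∑ s, |ρ₀ s|)) fun t => ?_
  rw [Real.norm_eq_abs, abs_mul, abs_pow]
  gcongr
  exact (Finset.single_le_sum (fun s _ => abs_nonneg _) (Finset.mem_univ s)).trans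
    (sum_abs_le ρ₀ hP hPsum hπ hπsum t)

theorem sum_visit_mul {ρ₀ : S → ℝ} {γ : ℝ}
    (hD : ∀ s, Summable fun t => γ ^ t * stateDist P π ρ₀ t s) (g : S → ℝ) :
    ∑ s, visit P π ρ₀ γ s * g s = ∑' t, γ ^ t * ∑ s, stateDist P π ρ₀ t s * g s := by
  simp only [visit, ← tsum_mul_right, Finset.mul_sum, ← mul_assoc]
  exact (Summable.tsum_finsetSum fun s _ => (hD s).mul_right (g s)).symm

end stateDist

theorem sum_policy_mul_advantage {S A : Type} [Fintype S] [Fintype A] {P : S → A → S → ℝ}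
    {π : S → A → ℝ} {r V Vπ : S → ℝ} {γ : ℝ} {s : S} (hπsum : ∑ a, π s a = 1)
    (hVπ : Vπ s = ∑ a, π s a * (r s + γ * ∑ s', P s a s' * Vπ s')) :
    ∑ a, π s a * (r s + γ * ∑ s', P s a s' * V s' - V s) =
      Vπ s - V s - γ * expectNext P π (fun s => Vπ s - V s) s := by
  have hpointwise : ∀ a, π s a * (r s + γ * ∑ s', P s a s' * V s' - V s) =
      π s a * (r s + γ * ∑ s', P s a s' * Vπ s') -
        γ * (π s a * ∑ s', P s a s' * (Vπ s' - V s')) - π s a * V s := by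
    intro a
    simp only [mul_sub, Finset.sum_sub_distrib]
    ring
  rw [Finset.sum_congr rfl fun a _ => hpointwise a, Finset.sum_sub_distrib, Finset.sum_sub_distrib,
    ← hVπ, ← Finset.mul_sum, ← Finset.sum_mul, hπsum, one_mul, expectNext]
  ring

theorem stmt_1_general {S A : Type} [Fintype S] [Fintype A]
    (P : S → A → S → ℝ) (r : S → ℝ) (ρ₀ : S → ℝ) (γ : ℝ)
    (πt : S → A → ℝ) (V Vt : S → ℝ) (Q Aπ : S → A → ℝ)
    (hγ0 : 0 < γ) (hγ1 : γ < 1)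
    (hPpos : ∀ s a s', 0 ≤ P s a s') (hPsum : ∀ s a, ∑ s', P s a s' = 1)
    (hπtpos : ∀ s a, 0 ≤ πt s a) (hπtsum : ∀ s, ∑ a, πt s a = 1)
    (hVt : ∀ s, Vt s = ∑ a, πt s a * (r s + γ * ∑ s', P s a s' * Vt s'))
    (hQ : ∀ s a, Q s a = r s + γ * ∑ s', P s a s' * V s')
    (hA : ∀ s a, Aπ s a = Q s a - V s) :
    ∑ s, ρ₀ s * Vt s =
      (∑ s, ρ₀ s * V s) +
        ∑ s, visit P πt ρ₀ γ s * ∑ a, πt s a * Aπ s a := by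
  set W : S → ℝ := fun s => Vt s - V s
  set u : ℕ → ℝ := fun t => γ ^ t * ∑ s, stateDist P πt ρ₀ t s * W s
  have hD := stateDist.summable_pow_mul ρ₀ hPpos hPsum hπtpos hπtsum
    (abs_lt.mpr ⟨by linarith, hγ1⟩)
  have hu : Summable u := by
    simpa only [u, Finset.mul_sum, mul_assoc] using
      summable_sum fun s _ => (hD s).mul_right (W s)
  have hadv : ∀ s, ∑ a, πt s a * Aπ s a = W s - γ * expectNext P πt W s := fun s => by
    simp only [hA, hQ]
    exact sum_policy_mul_advantage (hπtsum s) (hVt s)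
  have hstep : ∀ t,
      γ ^ t * ∑ s, stateDist P πt ρ₀ t s * ∑ a, πt s a * Aπ s a = u t - u (t + 1) := by
    intro t
    simp only [u, hadv, mul_sub, Finset.sum_sub_distrib, stateDist.sum_succ_mul, mul_left_comm _ γ,
      ← Finset.mul_sum, pow_succ]
    ring
  rw [stateDist.sum_visit_mul hD, tsum_congr hstep, hu.tsum_sub_succ]
  simp only [u, W, stateDist, pow_zero, one_mul, mul_sub, Finset.sum_sub_distrib]
  ring

/-- η(π̃) = η(π) + Σ_s ρ_π̃(s) Σ_a π̃(a|s) A_π(s,a). -/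
theorem stmt_1 {S A : Type} [Fintype S] [Fintype A]
    (P : S → A → S → ℝ) (r : S → ℝ) (ρ₀ : S → ℝ) (γ : ℝ)
    (π πt : S → A → ℝ) (V Vt : S → ℝ) (Q Aπ : S → A → ℝ)
    (hγ0 : 0 < γ) (hγ1 : γ < 1)
    (hPpos : ∀ s a s', 0 ≤ P s a s') (hPsum : ∀ s a, ∑ s', P s a s' = 1)
    (hρpos : ∀ s, 0 ≤ ρ₀ s) (hρsum : ∑ s, ρ₀ s = 1)
    (hπpos : ∀ s a, 0 ≤ π s a) (hπsum : ∀ s, ∑ a, π s a = 1)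
    (hπtpos : ∀ s a, 0 ≤ πt s a) (hπtsum : ∀ s, ∑ a, πt s a = 1)
    (hV : ∀ s, V s = ∑ a, π s a * (r s + γ * ∑ s', P s a s' * V s'))
    (hVt : ∀ s, Vt s = ∑ a, πt s a * (r s + γ * ∑ s', P s a s' * Vt s'))
    (hQ : ∀ s a, Q s a = r s + γ * ∑ s', P s a s' * V s')
    (hA : ∀ s a, Aπ s a = Q s a - V s) :
    ∑ s, ρ₀ s * Vt s =
      (∑ s, ρ₀ s * V s) +
        ∑ s, visit P πt ρ₀ γ s * ∑ a, πt s a * Aπ s a :=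
  stmt_1_general P r ρ₀ γ πt V Vt Q Aπ hγ0 hγ1 hPpos hPsum hπtpos hπtsum hVt hQ hA
end

section
/- If π_θ is a policy family differentiable in parameter θ, then the local surrogate L_{π_{θ₀}}(π_θ) = η(π_{θ₀}) + Σ_s ρ_{π_{θ₀}}(s) Σ_a π_θ(a|s) A_{π_{θ₀}}(s,a) matches η(π_θ) to first order at θ = θ₀: L_{π_{θ₀}}(π_{θ₀}) = η(π_{θ₀}) and ∇_θ L_{π_{θ₀}}(π_θ)|_{θ=θ₀} = ∇_θ η(π_θ)|_{θ=θ₀}. -/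
/-!
Differentiating the Bellman equation at `θ₀` shows that the value gradient `∇V` satisfies a
Bellman equation of its own, with reward `∑ₐ Q(s,a) ∇π(a|s)` and the transition kernel of
`π_{θ₀}`. Unrolling it along the state distributions `d_t` (the remainder is `O(γⁿ)`) gives
`∇η = ∑ₛ ρ(s) ∑ₐ Q(s,a) ∇π(a|s)`, the policy gradient theorem. As `∑ₐ π(a|s) = 1` for every `θ`,
`∑ₐ ∇π(a|s) = 0`, so `Q` may be replaced by the advantage, which yields `∇L`; and
`∑ₐ π(a|s) A(s,a) = 0` at `θ₀` gives `L(θ₀) = η(θ₀)`.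
-/

open Finset Filter Topology

noncomputable def policyTransition {S A : Type} [Fintype A]
    (P : S → A → S → ℝ) (π : S → A → ℝ) (s s' : S) : ℝ :=
  ∑ a, π s a * P s a s'

section StateDist

variable {S A : Type} [Fintype S] [Fintype A] {P : S → A → S → ℝ} {π : S → A → ℝ}
  {ρ₀ : S → ℝ}

theorem stateDist_succ_apply (t : ℕ) (s' : S) :
    stateDist P π ρ₀ (t + 1) s' = ∑ s, stateDist P π ρ₀ t s * policyTransition P π s s' := by
  simp only [stateDist, policyTransition, mul_sum, mul_assoc]

theorem stateDist_nonneg (hP : ∀ s a s', 0 ≤ P s a s') (hπ : ∀ s a, 0 ≤ π s a)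
    (hρ : ∀ s, 0 ≤ ρ₀ s) : ∀ t s, 0 ≤ stateDist P π ρ₀ t s
  | 0, s => hρ s
  | t + 1, s' => sum_nonneg fun s _ => sum_nonneg fun a _ =>
      mul_nonneg (mul_nonneg (stateDist_nonneg hP hπ hρ t s) (hπ s a)) (hP s a s')

theorem sum_policyTransition (hPsum : ∀ s a, ∑ s', P s a s' = 1)
    (hπsum : ∀ s, ∑ a, π s a = 1) (s : S) : ∑ s', policyTransition P π s s' = 1 := by
  simp only [policyTransition]
  rw [sum_comm]
  simp only [← mul_sum, hPsum, mul_one, hπsum]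

theorem sum_stateDist (hPsum : ∀ s a, ∑ s', P s a s' = 1) (hπsum : ∀ s, ∑ a, π s a = 1)
    (hρsum : ∑ s, ρ₀ s = 1) : ∀ t, ∑ s, stateDist P π ρ₀ t s = 1
  | 0 => hρsum
  | t + 1 => by
    simp only [stateDist_succ_apply]
    rw [sum_comm]
    simp only [← mul_sum, sum_policyTransition hPsum hπsum, mul_one,
      sum_stateDist hPsum hπsum hρsum t]

theorem stateDist_le_one (hP : ∀ s a s', 0 ≤ P s a s') (hPsum : ∀ s a, ∑ s', P s a s' = 1)
    (hπ : ∀ s a, 0 ≤ π s a) (hπsum : ∀ s, ∑ a, π s a = 1) (hρ : ∀ s, 0 ≤ ρ₀ s)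
    (hρsum : ∑ s, ρ₀ s = 1) (t : ℕ) (s : S) : stateDist P π ρ₀ t s ≤ 1 :=
  sum_stateDist hPsum hπsum hρsum t ▸
    single_le_sum (fun s _ => stateDist_nonneg hP hπ hρ t s) (mem_univ s)

theorem hasSum_visit {γ : ℝ} (hγ0 : 0 ≤ γ) (hγ1 : γ < 1) (hP : ∀ s a s', 0 ≤ P s a s')
    (hPsum : ∀ s a, ∑ s', P s a s' = 1) (hπ : ∀ s a, 0 ≤ π s a) (hπsum : ∀ s, ∑ a, π s a = 1)
    (hρ : ∀ s, 0 ≤ ρ₀ s) (hρsum : ∑ s, ρ₀ s = 1) (s : S) :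
    HasSum (fun t => γ ^ t * stateDist P π ρ₀ t s) (visit P π ρ₀ γ s) :=
  (Summable.of_nonneg_of_le
    (fun t => mul_nonneg (pow_nonneg hγ0 t) (stateDist_nonneg hP hπ hρ t s))
    (fun t => mul_le_of_le_one_right (pow_nonneg hγ0 t)
      (stateDist_le_one hP hPsum hπ hπsum hρ hρsum t s))
    (summable_geometric_of_lt_one hγ0 hγ1)).hasSum

theorem norm_sum_stateDist_smul_le {F : Type*} [SeminormedAddCommGroup F] [NormedSpace ℝ F]
    (hP : ∀ s a s', 0 ≤ P s a s') (hPsum : ∀ s a, ∑ s', P s a s' = 1) (hπ : ∀ s a, 0 ≤ π s a)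
    (hπsum : ∀ s, ∑ a, π s a = 1) (hρ : ∀ s, 0 ≤ ρ₀ s) (hρsum : ∑ s, ρ₀ s = 1)
    (G : S → F) (t : ℕ) : ‖∑ s, stateDist P π ρ₀ t s • G s‖ ≤ ∑ s, ‖G s‖ := by
  refine (norm_sum_le _ _).trans (sum_le_sum fun s _ => ?_)
  rw [norm_smul, Real.norm_of_nonneg (stateDist_nonneg hP hπ hρ t s)]
  exact mul_le_of_le_one_left (norm_nonneg _) (stateDist_le_one hP hPsum hπ hπsum hρ hρsum t s)

theorem sum_stateDist_succ_smul {F : Type*} [AddCommGroup F] [Module ℝ F] (G : S → F) (t : ℕ) :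
    ∑ s', stateDist P π ρ₀ (t + 1) s' • G s'
      = ∑ s, stateDist P π ρ₀ t s • ∑ s', policyTransition P π s s' • G s' := by
  simp only [stateDist_succ_apply, sum_smul, smul_sum, smul_smul]
  exact sum_comm

theorem sum_smul_eq_discounted_unroll {F : Type*} [AddCommGroup F] [Module ℝ F] {γ : ℝ}
    {G D : S → F} (hG : ∀ s, G s = D s + γ • ∑ s', policyTransition P π s s' • G s') (n : ℕ) :
    ∑ s, ρ₀ s • G s = ∑ t ∈ range n, γ ^ t • ∑ s, stateDist P π ρ₀ t s • D s
      + γ ^ n • ∑ s, stateDist P π ρ₀ n s • G s := by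
  induction n with
  | zero => simp [stateDist]
  | succ n ih =>
    have step : ∑ s, stateDist P π ρ₀ n s • G s = ∑ s, stateDist P π ρ₀ n s • D s
        + γ • ∑ s, stateDist P π ρ₀ (n + 1) s • G s := by
      rw [sum_stateDist_succ_smul, smul_sum, ← sum_add_distrib]
      refine sum_congr rfl fun s _ => ?_
      rw [smul_comm, ← smul_add, ← hG]
    rw [ih, step, sum_range_succ, smul_add, smul_smul, ← pow_succ, add_assoc]

theorem sum_smul_eq_sum_visit_smul_of_bellman {F : Type*} [NormedAddCommGroup F]
    [NormedSpace ℝ F] {γ : ℝ} (hγ0 : 0 ≤ γ) (hγ1 : γ < 1) (hP : ∀ s a s', 0 ≤ P s a s')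
    (hPsum : ∀ s a, ∑ s', P s a s' = 1) (hπ : ∀ s a, 0 ≤ π s a) (hπsum : ∀ s, ∑ a, π s a = 1)
    (hρ : ∀ s, 0 ≤ ρ₀ s) (hρsum : ∑ s, ρ₀ s = 1) {G D : S → F}
    (hG : ∀ s, G s = D s + γ • ∑ s', policyTransition P π s s' • G s') :
    ∑ s, ρ₀ s • G s = ∑ s, visit P π ρ₀ γ s • D s := by
  have hrem : Tendsto (fun n => γ ^ n • ∑ s, stateDist P π ρ₀ n s • G s) atTop (𝓝 0) :=
    (tendsto_pow_atTop_nhds_zero_of_lt_one hγ0 hγ1).zero_smul_isBoundedUnder_le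
      (isBoundedUnder_of ⟨_, norm_sum_stateDist_smul_le hP hPsum hπ hπsum hρ hρsum G⟩)
  have hpartial : Tendsto (fun n => ∑ t ∈ range n, γ ^ t • ∑ s, stateDist P π ρ₀ t s • D s)
      atTop (𝓝 (∑ s, ρ₀ s • G s)) := by
    have h := (tendsto_const_nhds (x := ∑ s, ρ₀ s • G s)).sub hrem
    rw [sub_zero] at h
    exact h.congr fun n => by rw [sum_smul_eq_discounted_unroll hG n, add_sub_cancel_right]
  have hsum : HasSum (fun t => γ ^ t • ∑ s, stateDist P π ρ₀ t s • D s)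
      (∑ s, visit P π ρ₀ γ s • D s) := by
    simp only [smul_sum, smul_smul]
    exact hasSum_sum fun s _ => (hasSum_visit hγ0 hγ1 hP hPsum hπ hπsum hρ hρsum s).smul_const _
  exact tendsto_nhds_unique hpartial hsum.tendsto_sum_nat

end StateDist

section Gradient

variable {E F : Type*} [NormedAddCommGroup E] [NormedSpace ℝ E] [NormedAddCommGroup F]
  [NormedSpace ℝ F]

theorem sum_eq_zero_of_hasFDerivAt_of_sum_const {ι : Type*} (u : Finset ι) {f : ι → E → F}
    {f' : ι → E →L[ℝ] F} {x : E} {c : F} (hf : ∀ i ∈ u, HasFDerivAt (f i) (f' i) x)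
    (hc : ∀ y, ∑ i ∈ u, f i y = c) : ∑ i ∈ u, f' i = 0 := by
  have hconst : (fun y => ∑ i ∈ u, f i y) = fun _ => c := funext hc
  exact (HasFDerivAt.fun_sum hf).unique (hconst ▸ hasFDerivAt_const c x)

theorem value_fderiv_bellman {S A : Type} [Fintype S] [Fintype A] {P : S → A → S → ℝ}
    {r : S → ℝ} {γ : ℝ} {π : E → S → A → ℝ} {V : E → S → ℝ} {Q : S → A → ℝ} {θ₀ : E}
    {p : S → A → E →L[ℝ] ℝ} {G : S → E →L[ℝ] ℝ}
    (hV : ∀ θ s, V θ s = ∑ a, π θ s a * (r s + γ * ∑ s', P s a s' * V θ s'))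
    (hQ : ∀ s a, Q s a = r s + γ * ∑ s', P s a s' * V θ₀ s')
    (hp : ∀ s a, HasFDerivAt (fun θ => π θ s a) (p s a) θ₀)
    (hG : ∀ s, HasFDerivAt (fun θ => V θ s) (G s) θ₀) (s : S) :
    G s = ∑ a, Q s a • p s a + γ • ∑ s', policyTransition P (π θ₀) s s' • G s' := by
  have hrhs : HasFDerivAt (fun θ => V θ s)
      (∑ a, (π θ₀ s a • γ • ∑ s', P s a s' • G s' + Q s a • p s a)) θ₀ := by
    simp only [hV _ s, hQ s]
    exact HasFDerivAt.fun_sum fun a _ => (hp s a).mul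
      (((HasFDerivAt.fun_sum fun s' _ => (hG s').const_mul (P s a s')).const_mul γ).const_add _)
  rw [(hG s).unique hrhs, sum_add_distrib, add_comm]
  simp only [policyTransition, smul_sum, sum_smul, smul_smul]
  rw [sum_comm]
  exact congrArg _ (sum_congr rfl fun _ _ => sum_congr rfl fun _ _ => by ring_nf)

end Gradient

/-- The surrogate L matches η to first order at θ₀. -/
theorem stmt_2 {S A : Type} [Fintype S] [Fintype A]
    {E : Type} [NormedAddCommGroup E] [NormedSpace ℝ E]
    (P : S → A → S → ℝ) (r : S → ℝ) (ρ₀ : S → ℝ) (γ : ℝ)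
    (π : E → S → A → ℝ) (V : E → S → ℝ) (Q Aπ : S → A → ℝ) (θ₀ : E)
    (hγ0 : 0 < γ) (hγ1 : γ < 1)
    (hPpos : ∀ s a s', 0 ≤ P s a s') (hPsum : ∀ s a, ∑ s', P s a s' = 1)
    (hρpos : ∀ s, 0 ≤ ρ₀ s) (hρsum : ∑ s, ρ₀ s = 1)
    (hπpos : ∀ θ s a, 0 ≤ π θ s a) (hπsum : ∀ θ s, ∑ a, π θ s a = 1)
    (hπdiff : ∀ s a, Differentiable ℝ (fun θ => π θ s a))
    (hVdiff : ∀ s, Differentiable ℝ (fun θ => V θ s))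
    (hV : ∀ θ s, V θ s = ∑ a, π θ s a * (r s + γ * ∑ s', P s a s' * V θ s'))
    (hQ : ∀ s a, Q s a = r s + γ * ∑ s', P s a s' * V θ₀ s')
    (hA : ∀ s a, Aπ s a = Q s a - V θ₀ s)
    (η L : E → ℝ)
    (hη : ∀ θ, η θ = ∑ s, ρ₀ s * V θ s)
    (hL : ∀ θ, L θ = η θ₀ + ∑ s, visit P (π θ₀) ρ₀ γ s * ∑ a, π θ s a * Aπ s a) :
    L θ₀ = η θ₀ ∧ fderiv ℝ L θ₀ = fderiv ℝ η θ₀ := by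
  have hp s a := (hπdiff s a θ₀).hasFDerivAt
  have hG s := (hVdiff s θ₀).hasFDerivAt
  have hp_sum s : ∑ a, fderiv ℝ (fun θ => π θ s a) θ₀ = 0 :=
    sum_eq_zero_of_hasFDerivAt_of_sum_const _ (fun a _ => hp s a) (fun θ => hπsum θ s)
  have hadv_mean s : ∑ a, π θ₀ s a * Aπ s a = 0 := by
    have hVQ : V θ₀ s = ∑ a, π θ₀ s a * Q s a := (hV θ₀ s).trans (by simp only [hQ])
    simp only [hA, mul_sub, sum_sub_distrib, ← sum_mul, hπsum, one_mul, ← hVQ, sub_self]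
  have hadv_grad s : ∑ a, Aπ s a • fderiv ℝ (fun θ => π θ s a) θ₀
      = ∑ a, Q s a • fderiv ℝ (fun θ => π θ s a) θ₀ := by
    simp only [hA, sub_smul, sum_sub_distrib, ← smul_sum, hp_sum, smul_zero, sub_zero]
  have hLd : HasFDerivAt L
      (∑ s, visit P (π θ₀) ρ₀ γ s • ∑ a, Aπ s a • fderiv ℝ (fun θ => π θ s a) θ₀) θ₀ := by
    rw [funext hL]
    exact (HasFDerivAt.fun_sum fun s _ => (HasFDerivAt.fun_sum fun a _ =>
      (hp s a).mul_const (Aπ s a)).const_mul _).const_add _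
  have hηd : HasFDerivAt η (∑ s, ρ₀ s • fderiv ℝ (fun θ => V θ s) θ₀) θ₀ := by
    rw [funext hη]
    exact HasFDerivAt.fun_sum fun s _ => (hG s).const_mul (ρ₀ s)
  refine ⟨by simp [hL, hadv_mean], ?_⟩
  rw [hLd.fderiv, hηd.fderiv, sum_smul_eq_sum_visit_smul_of_bellman hγ0.le hγ1 hPpos hPsum
    (hπpos θ₀) (hπsum θ₀) hρpos hρsum (value_fderiv_bellman hV hQ hp hG)]
  simp only [hadv_grad]
end

section
/- With G = (I − γP_π)^{-1}, Δ = P_π̃ − P_π, value function v = V_π (as a row vector acting on state densities), and ρ_π = Gρ₀ the discounted visitation, the first-order term satisfies γ v Δ ρ_π = L_π(π̃) − η(π), i.e. γ v Δ ρ_π = Σ_s ρ_π(s) Σ_a (π̃(a|s) − π(a|s)) A_π(s,a). -/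
open Finset Matrix

/-- Induced state transition matrix acting on state densities:
entry `(s', s)` is `P_π(s'|s) = Σ_a π(a|s) P(s'|s,a)`. -/
noncomputable def transMat {S A : Type} [Fintype S] [Fintype A]
    (P : S → A → S → ℝ) (π : S → A → ℝ) : Matrix S S ℝ :=
  fun s' s => ∑ a, π s a * P s a s'

/-- First-order perturbation term: γ v Δ ρ_π = L_π(π̃) − η(π)
    = Σ_s ρ_π(s) Σ_a (π̃(a|s) − π(a|s)) A_π(s,a). -/
theorem stmt_14 {S A : Type} [Fintype S] [Fintype A] [DecidableEq S]
    (P : S → A → S → ℝ) (r : S → ℝ) (ρ₀ : S → ℝ) (γ : ℝ)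
    (π πt : S → A → ℝ) (V : S → ℝ) (Q Aπ : S → A → ℝ)
    (hγ0 : 0 < γ) (hγ1 : γ < 1)
    (hPpos : ∀ s a s', 0 ≤ P s a s') (hPsum : ∀ s a, ∑ s', P s a s' = 1)
    (hρpos : ∀ s, 0 ≤ ρ₀ s) (hρsum : ∑ s, ρ₀ s = 1)
    (hπpos : ∀ s a, 0 ≤ π s a) (hπsum : ∀ s, ∑ a, π s a = 1)
    (hπtpos : ∀ s a, 0 ≤ πt s a) (hπtsum : ∀ s, ∑ a, πt s a = 1)
    (hV : ∀ s, V s = ∑ a, π s a * (r s + γ * ∑ s', P s a s' * V s'))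
    (hQ : ∀ s a, Q s a = r s + γ * ∑ s', P s a s' * V s')
    (hA : ∀ s a, Aπ s a = Q s a - V s)
    (G Δ : Matrix S S ℝ) (ρπ : S → ℝ)
    (hG : G = (1 - γ • transMat P π)⁻¹)
    (hΔ : Δ = transMat P πt - transMat P π)
    (hρπ : ρπ = G *ᵥ ρ₀) :
    γ * (V ⬝ᵥ (Δ *ᵥ ρπ)) = ∑ s, ρπ s * ∑ a, (πt s a - π s a) * Aπ s a := by
  have key : ∀ s, ∑ a, (πt s a - π s a) * Aπ s a
      = ∑ a, (πt s a - π s a) * (γ * ∑ s', P s a s' * V s') := by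
    intro s
    have h0 : ∑ a, (πt s a - π s a) = 0 := by
      rw [Finset.sum_sub_distrib, hπtsum, hπsum]; ring
    have h1 : ∑ a, (πt s a - π s a) * Aπ s a
        = (∑ a, (πt s a - π s a) * (γ * ∑ s', P s a s' * V s'))
          + (∑ a, (πt s a - π s a)) * (r s - V s) := by
      rw [Finset.sum_mul, ← Finset.sum_add_distrib]
      apply Finset.sum_congr rfl
      intro a _
      rw [hA, hQ]; ring
    rw [h1, h0]; ring
  simp only [key]
  simp only [hΔ, transMat, dotProduct, mulVec, Matrix.sub_apply,
    Finset.mul_sum, sub_mul, Finset.sum_mul, Finset.sum_sub_distrib, mul_sub]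
  congr 1 <;>
  · rw [Finset.sum_comm]
    apply Finset.sum_congr rfl
    intro s _
    rw [Finset.sum_comm]
    apply Finset.sum_congr rfl
    intro a _
    apply Finset.sum_congr rfl
    intro s' _
    ring
end
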